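/- arXiv:2008.06090 — 3 statements merged into one kernel-verified Lean document; each statement's English description precedes it below -/
import Mathlib

section
/- Every proper graded R-submodule of the graded R-module M is a graded r-submodule of M if and only if a·K = K for every graded R-submodule K of M and every a ∈ h(R) with a ∉ Z(M). -/
/-!
Setting: `R` is a commutative ring graded by a group `ι` (written additively),
`M` is a graded `R`-module.  `𝒜 g` / `ℳ g` are the homogeneous components,
`SetLike.Homogeneous` expresses membership in `h(R)` resp. `h(M)`.
-/

open Pointwise

variable {ι : Type*} [DecidableEq ι] [AddGroup ι]
variable {R : Type*} [CommRing R] {M : Type*} [AddCommGroup M] [Module R M]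
variable (𝒜 : ι → AddSubgroup R) (ℳ : ι → AddSubgroup M)
variable [GradedRing 𝒜] [DirectSum.Decomposition ℳ] [SetLike.GradedSMul 𝒜 ℳ]

/-- A submodule `K` of `M` is graded if the homogeneous components of each of its
elements belong to `K`. -/
def IsGradedSub (K : Submodule R M) : Prop :=
  ∀ x ∈ K, ∀ i, (DirectSum.decompose ℳ x i : M) ∈ K

/-- An ideal `I` of `R` is graded if the homogeneous components of each of its
elements belong to `I`. -/
def IsGradedIdl (I : Ideal R) : Prop :=
  ∀ x ∈ I, ∀ i, (DirectSum.decompose 𝒜 x i : R) ∈ I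

/-- A proper graded submodule `K` of `M` is a graded `r`-submodule if whenever
`a ∈ h(R)` and `x ∈ h(M)` satisfy `a • x ∈ K` and `Ann_M(a) = {0}`, then `x ∈ K`. -/
def IsGrRSubmodule (K : Submodule R M) : Prop :=
  K ≠ ⊤ ∧ IsGradedSub ℳ K ∧
    ∀ a : R, ∀ x : M, SetLike.IsHomogeneousElem 𝒜 a → SetLike.IsHomogeneousElem ℳ x →
      a • x ∈ K → (∀ m : M, a • m = 0 → m = 0) → x ∈ K

/-- A proper graded submodule `K` of `M` is graded prime if whenever `a ∈ h(R)` and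
`x ∈ h(M)` satisfy `a • x ∈ K`, then `x ∈ K` or `a ∈ (K :_R M)`. -/
def IsGrPrimeSubmodule (K : Submodule R M) : Prop :=
  K ≠ ⊤ ∧ IsGradedSub ℳ K ∧
    ∀ a : R, ∀ x : M, SetLike.IsHomogeneousElem 𝒜 a → SetLike.IsHomogeneousElem ℳ x →
      a • x ∈ K → x ∈ K ∨ ∀ m : M, a • m ∈ K

/-- A proper graded submodule `K` of `M` is a graded special `r`-submodule if whenever
`a ∈ h(R)` and `x ∈ h(M)` satisfy `a • x ∈ K` and `Ann_R(x) = {0}`, then `a ∈ (K :_R M)`. -/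
def IsGrSpecialRSubmodule (K : Submodule R M) : Prop :=
  K ≠ ⊤ ∧ IsGradedSub ℳ K ∧
    ∀ a : R, ∀ x : M, SetLike.IsHomogeneousElem 𝒜 a → SetLike.IsHomogeneousElem ℳ x →
      a • x ∈ K → (∀ r : R, r • x = 0 → r = 0) → ∀ m : M, a • m ∈ K

/-!
For a homogeneous `a` of degree `g`, the degree-`i` component of `a • m` is `a` times the
degree-`(-g + i)` component of `m`, so `a • K` is graded whenever `K` is. If every proper graded
submodule is an `r`-submodule and `a` is regular, apply this to `a • K ≠ ⊤`: each homogeneous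
component `xᵢ` of `x ∈ K` has `a • xᵢ ∈ a • K`, hence `xᵢ ∈ a • K`, and so `K ≤ a • K`.
Conversely, if `a • K = K` and `a • x ∈ K`, then `a • x = a • k` with `k ∈ K`, and regularity of
`a` gives `x = k`.
-/

omit [AddGroup ι] in
theorem IsGradedSub.isHomogeneous {K : Submodule R M} (hK : IsGradedSub ℳ K) :
    K.IsHomogeneous ℳ :=
  fun i _ hx => hK _ hx i

omit [GradedRing 𝒜] in
theorem coe_decompose_smul_add_of_left_mem {g : ι} {a : R} (ha : a ∈ 𝒜 g) (m : M) (i : ι) :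
    (DirectSum.decompose ℳ (a • m) (g + i) : M) = a • (DirectSum.decompose ℳ m i : M) := by
  induction m using DirectSum.Decomposition.inductionOn ℳ with
  | zero => simp
  | @homogeneous j x =>
    have hax : a • (x : M) ∈ ℳ (g + j) := SetLike.GradedSMul.smul_mem ha x.2
    by_cases hji : j = i
    · subst hji
      rw [DirectSum.decompose_of_mem_same ℳ x.2, DirectSum.decompose_of_mem_same ℳ hax]
    · rw [DirectSum.decompose_of_mem_ne ℳ x.2 hji,
        DirectSum.decompose_of_mem_ne ℳ hax (fun h => hji (add_left_cancel h)), smul_zero]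
  | add m m' hm hm' =>
    simp only [smul_add, DirectSum.decompose_add, DirectSum.add_apply, AddSubgroup.coe_add, hm,
      hm']

omit [GradedRing 𝒜] in
theorem IsGradedSub.pointwise_smul {K : Submodule R M} (hK : IsGradedSub ℳ K) {g : ι} {a : R}
    (ha : a ∈ 𝒜 g) : IsGradedSub ℳ (a • K) := by
  intro x hx i
  obtain ⟨k, hk, rfl⟩ := (Submodule.mem_smul_pointwise_iff_exists _ _ _).1 hx
  have hcomp := coe_decompose_smul_add_of_left_mem 𝒜 ℳ ha k (-g + i)
  rw [add_neg_cancel_left] at hcomp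
  rw [hcomp]
  exact Submodule.smul_mem_pointwise_smul _ _ _ (hK k hk _)

theorem Submodule.mem_of_smul_mem_of_pointwise_smul_eq {K : Submodule R M} {a : R} {x : M}
    (hK : a • K = K) (ha : ∀ m : M, a • m = 0 → m = 0) (hx : a • x ∈ K) : x ∈ K := by
  rw [← hK] at hx
  obtain ⟨k, hk, hak⟩ := (Submodule.mem_smul_pointwise_iff_exists _ _ _).1 hx
  have hxk : x = k := sub_eq_zero.1 (ha _ (by rw [smul_sub, hak, sub_self]))
  exact hxk ▸ hk

theorem stmt5 :
    (∀ K : Submodule R M, K ≠ ⊤ → IsGradedSub ℳ K → IsGrRSubmodule 𝒜 ℳ K) ↔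
      ∀ K : Submodule R M, IsGradedSub ℳ K →
        ∀ a : R, SetLike.IsHomogeneousElem 𝒜 a → (∀ m : M, a • m = 0 → m = 0) →
          a • K = K := by
  constructor
  · intro H K hK a ⟨g, ha⟩ hreg
    refine le_antisymm (Submodule.smul_le_self_of_tower a K) fun x hx => ?_
    by_cases htop : a • K = ⊤
    · exact htop ▸ Submodule.mem_top
    have haK := hK.pointwise_smul 𝒜 ℳ ha
    obtain ⟨-, -, hr⟩ := H _ htop haK
    refine (haK.isHomogeneous.mem_iff ℳ).2 fun i => hr a _ ⟨g, ha⟩ ⟨i, SetLike.coe_mem _⟩ ?_ hreg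
    exact Submodule.smul_mem_pointwise_smul _ _ _ (hK x hx i)
  · intro H K hne hK
    exact ⟨hne, hK, fun a x ha _ hax hreg =>
      Submodule.mem_of_smul_mem_of_pointwise_smul_eq (H K hK a ha hreg) hreg hax⟩
end

section
/- Let K be a graded special r-submodule of the graded R-module M that is maximal (with respect to inclusion) among all graded special r-submodules of M. Then K is a graded prime R-submodule of M. -/
/-!
Setting: `R` is a commutative ring graded by a group `ι` (written additively),
`M` is a graded `R`-module.  `𝒜 g` / `ℳ g` are the homogeneous components,
`SetLike.Homogeneous` expresses membership in `h(R)` resp. `h(M)`.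
-/

open Pointwise

variable {ι : Type*} [DecidableEq ι] [AddGroup ι]
variable {R : Type*} [CommRing R] {M : Type*} [AddCommGroup M] [Module R M]
variable (𝒜 : ι → AddSubgroup R) (ℳ : ι → AddSubgroup M)
variable [GradedRing 𝒜] [DirectSum.Decomposition ℳ] [SetLike.GradedSMul 𝒜 ℳ]

/-! The colon submodule `(K :_M a) = {m | a • m ∈ K}` of a maximal graded special `r`-submodule `K`
contains `K`, and for homogeneous `a` it is again graded and inherits the special `r`-property
(test `a * b` against `K`). So either it is all of `M`, i.e. `a ∈ (K :_R M)`, or by maximality it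
equals `K`; in the latter case `a • x ∈ K` forces `x ∈ K`. -/

theorem DirectSum.coe_decompose_smul_add_of_left_mem {ι S R N M : Type*} [DecidableEq ι]
    [AddLeftCancelMonoid ι] [SetLike S R] [AddCommMonoid M] [DistribSMul R M] [SetLike N M]
    [AddSubmonoidClass N M] (𝒜 : ι → S) (ℳ : ι → N) [DirectSum.Decomposition ℳ]
    [SetLike.GradedSMul 𝒜 ℳ] {i j : ι} {a : R} (ha : a ∈ 𝒜 i) (m : M) :
    (DirectSum.decompose ℳ (a • m) (i + j) : M) = a • (DirectSum.decompose ℳ m j : M) := by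
  induction m using DirectSum.Decomposition.inductionOn ℳ with
  | zero => simp
  | @homogeneous k x =>
    obtain ⟨x, hx⟩ := x
    have hax : a • x ∈ ℳ (i + k) := SetLike.GradedSMul.smul_mem ha hx
    by_cases hjk : j = k
    · subst hjk
      rw [DirectSum.decompose_of_mem_same ℳ hax, DirectSum.decompose_of_mem_same ℳ hx]
    · rw [DirectSum.decompose_of_mem_ne ℳ hax (by simpa using Ne.symm hjk),
        DirectSum.decompose_of_mem_ne ℳ hx (Ne.symm hjk), smul_zero]
  | add x y hx hy =>
    simp only [smul_add, DirectSum.decompose_add, DirectSum.add_apply, AddMemClass.coe_add, hx, hy]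

section

variable {𝒜 ℳ}

omit [GradedRing 𝒜] in
theorem IsGradedSub.comap_lsmul {K : Submodule R M} (hK : IsGradedSub ℳ K) {g : ι} {a : R}
    (ha : a ∈ 𝒜 g) : IsGradedSub ℳ (K.comap (LinearMap.lsmul R M a)) := fun m hm i => by
  simpa [DirectSum.coe_decompose_smul_add_of_left_mem 𝒜 ℳ ha] using hK _ hm (g + i)

theorem IsGrSpecialRSubmodule.comap_lsmul {K : Submodule R M} (hK : IsGrSpecialRSubmodule 𝒜 ℳ K)
    {a : R} (ha : SetLike.IsHomogeneousElem 𝒜 a) (hne : K.comap (LinearMap.lsmul R M a) ≠ ⊤) :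
    IsGrSpecialRSubmodule 𝒜 ℳ (K.comap (LinearMap.lsmul R M a)) := by
  obtain ⟨-, hKgr, hKsp⟩ := hK
  obtain ⟨g, hag⟩ := ha
  refine ⟨hne, hKgr.comap_lsmul hag, fun b y hb hy hby hann m => ?_⟩
  have hab := hKsp (a * b) y (SetLike.IsHomogeneousElem.mul ⟨g, hag⟩ hb) hy
    (by rw [mul_smul]; exact hby) hann m
  rwa [mul_smul] at hab

end

theorem stmt17 (K : Submodule R M) (hK : IsGrSpecialRSubmodule 𝒜 ℳ K)
    (hmax : ∀ L : Submodule R M, IsGrSpecialRSubmodule 𝒜 ℳ L → K ≤ L → L = K) :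
    IsGrPrimeSubmodule 𝒜 ℳ K := by
  refine ⟨hK.1, hK.2.1, fun a x ha _ hax => ?_⟩
  set L := K.comap (LinearMap.lsmul R M a)
  by_cases htop : L = ⊤
  · exact Or.inr fun m => (htop ▸ Submodule.mem_top : m ∈ L)
  have hKL : K ≤ L := fun k hk => K.smul_mem a hk
  have hLK : L = K := hmax L (hK.comap_lsmul ha htop) hKL
  exact Or.inl (hLK ▸ hax)
end

section
/- Every proper graded R-submodule of the graded R-module M is a graded special r-submodule of M if and only if either h(M) ⊆ T(M), or R·x = M for every x ∈ h(M) with x ∉ T(M). -/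
/-!
Setting: `R` is a commutative ring graded by a group `ι` (written additively),
`M` is a graded `R`-module.  `𝒜 g` / `ℳ g` are the homogeneous components,
`SetLike.Homogeneous` expresses membership in `h(R)` resp. `h(M)`.
-/

open Pointwise

variable {ι : Type*} [DecidableEq ι] [AddGroup ι]
variable {R : Type*} [CommRing R] {M : Type*} [AddCommGroup M] [Module R M]
variable (𝒜 : ι → AddSubgroup R) (ℳ : ι → AddSubgroup M)
variable [GradedRing 𝒜] [DirectSum.Decomposition ℳ] [SetLike.GradedSMul 𝒜 ℳ]

/-!
If `x` is homogeneous and torsion-free but `R • x ≠ M`, then `R • x` is a proper graded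
submodule containing `1 • x`, and being special would force `1 • M ⊆ R • x`. Conversely, if
such an `x` generates `M`, then `a • x ∈ K` gives `a • M = R • (a • x) ⊆ K`.
-/

theorem coe_decompose_smul_add_of_right_mem {r : R} {x : M} {i g : ι} (hx : x ∈ ℳ g) :
    (DirectSum.decompose ℳ (r • x) (i + g) : M) = (DirectSum.decompose 𝒜 r i : R) • x := by
  induction r using DirectSum.Decomposition.inductionOn 𝒜 with
  | zero => simp
  | @homogeneous j r =>
    have hrx : (r : R) • x ∈ ℳ (j + g) := SetLike.GradedSMul.smul_mem r.2 hx
    by_cases hij : j = i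
    · subst hij
      rw [DirectSum.decompose_of_mem_same ℳ hrx, DirectSum.decompose_coe, DirectSum.of_eq_same]
    · rw [DirectSum.decompose_of_mem_ne ℳ hrx (by simpa using hij),
        DirectSum.decompose_of_mem_ne 𝒜 r.2 hij, zero_smul]
  | add r s hr hs => rw [add_smul, DirectSum.decompose_add, DirectSum.add_apply,
      AddMemClass.coe_add, hr, hs, DirectSum.decompose_add, DirectSum.add_apply,
      AddMemClass.coe_add, add_smul]

include 𝒜 in
theorem isGradedSub_span_singleton {x : M} (hx : SetLike.IsHomogeneousElem ℳ x) :
    IsGradedSub ℳ (Submodule.span R {x}) := by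
  obtain ⟨g, hx⟩ := hx
  intro y hy i
  obtain ⟨r, rfl⟩ := Submodule.mem_span_singleton.mp hy
  rw [← sub_add_cancel i g, coe_decompose_smul_add_of_right_mem 𝒜 ℳ hx]
  exact Submodule.smul_mem _ _ (Submodule.mem_span_singleton_self x)

theorem Submodule.smul_mem_of_span_singleton_eq_top {K : Submodule R M} {a : R} {x : M}
    (hx : span R {x} = ⊤) (hax : a • x ∈ K) (m : M) : a • m ∈ K := by
  obtain ⟨r, rfl⟩ := mem_span_singleton.mp (hx ▸ mem_top : m ∈ span R {x})
  rw [smul_comm]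
  exact K.smul_mem r hax

theorem stmt18 :
    (∀ K : Submodule R M, K ≠ ⊤ → IsGradedSub ℳ K → IsGrSpecialRSubmodule 𝒜 ℳ K) ↔
      ((∀ x : M, SetLike.IsHomogeneousElem ℳ x → ∃ r : R, r ≠ 0 ∧ r • x = 0) ∨
        ∀ x : M, SetLike.IsHomogeneousElem ℳ x → (∀ r : R, r • x = 0 → r = 0) →
          Submodule.span R {x} = ⊤) := by
  constructor
  · intro hK
    refine Or.inr fun x hx hx_tf => ?_
    by_contra hx_top
    obtain ⟨-, -, hspecial⟩ := hK _ hx_top (isGradedSub_span_singleton 𝒜 ℳ hx)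
    have h_one_mem_colon := hspecial 1 x (SetLike.isHomogeneousElem_one 𝒜) hx
      (by rw [one_smul]; exact Submodule.mem_span_singleton_self x) hx_tf
    exact hx_top (eq_top_iff.mpr fun m _ => one_smul R m ▸ h_one_mem_colon m)
  · rintro hM K hK_top hK_graded
    refine ⟨hK_top, hK_graded, fun a x _ hx hax hx_tf => ?_⟩
    rcases hM with hT | hspan
    · obtain ⟨r, hr, hrx⟩ := hT x hx
      exact absurd (hx_tf r hrx) hr
    · exact Submodule.smul_mem_of_span_singleton_eq_top (hspan x hx hx_tf) hax
end
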